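/- Let m₀, m₀' ∈ L^∞(𝕋) be non-singular, h, h' ∈ L¹(𝕋) nonnegative with R_{m₀,m₀}h = h, R_{m₀',m₀'}h' = h', and h₀ ∈ L¹(𝕋) with R_{m₀,m₀'}h₀ = h₀. Suppose for i = 1, 2 that (πᵢ, Uᵢ, Hᵢ, φᵢ) are cyclic representations associated to h, that (πᵢ', Uᵢ', Hᵢ', φᵢ') are cyclic representations associated to h', and that Sᵢ : Hᵢ' → Hᵢ are bounded operators with Sᵢ πᵢ'(f) = πᵢ(f) Sᵢ for all f ∈ L^∞(𝕋), Sᵢ Uᵢ' = Uᵢ Sᵢ, and ⟨φᵢ, Sᵢ πᵢ'(f) φᵢ'⟩ = ∫_𝕋 f h₀ dμ for all f ∈ L^∞(𝕋). Then there exist unique unitary isomorphisms W : H₁ → H₂ and W' : H₁' → H₂' such that W π₁(f) = π₂(f) W and W' π₁'(f) = π₂'(f) W' for all f ∈ L^∞(𝕋), W U₁ = U₂ W, W' U₁' = U₂' W', W φ₁ = φ₂, W' φ₁' = φ₂', and S₂ W' = W S₁. -/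

import Mathlib

noncomputable section

open MeasureTheory Complex
open scoped ComplexConjugate ComplexInnerProductSpace

/-- An element of `L^∞(𝕋)`, realized as a bounded measurable 2π-periodic function on ℝ. -/
def IsFilter (f : ℝ → ℂ) : Prop :=
  Measurable f ∧ (∃ C : ℝ, ∀ x, ‖f x‖ ≤ C) ∧ ∀ x, f (x + 2 * Real.pi) = f x

/-- `m₀` is non-singular: it does not vanish on a set of positive measure. -/
def NonSingular (m : ℝ → ℂ) : Prop := ∀ᵐ x ∂(volume : Measure ℝ), m x ≠ 0

/-- The Ruelle transfer operator `R_{m₀,m₀'}` at scale `N`, written for 2π-periodic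
functions on ℝ. -/
def ruelle (N : ℕ) (m₀ m₀' : ℝ → ℂ) (f : ℝ → ℂ) : ℝ → ℂ := fun ω =>
  (N : ℂ)⁻¹ * ∑ l ∈ Finset.range N,
    conj (m₀ ((ω + 2 * Real.pi * l) / N)) * m₀' ((ω + 2 * Real.pi * l) / N) *
      f ((ω + 2 * Real.pi * l) / N)

/-- `h ∈ L¹(𝕋)`, as a 2π-periodic locally integrable function on ℝ. -/
def MemL1T (f : ℝ → ℂ) : Prop :=
  MeasureTheory.IntegrableOn f (Set.Ioc 0 (2 * Real.pi)) volume ∧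
    ∀ x, f (x + 2 * Real.pi) = f x

/-- The normalized integral over the circle: `∫_𝕋 f dμ = (2π)⁻¹ ∫_0^{2π} f`. -/
def circleInt (f : ℝ → ℂ) : ℂ :=
  (((2 * Real.pi)⁻¹ : ℝ) : ℂ) * ∫ x in Set.Ioc (0:ℝ) (2 * Real.pi), f x

/-- A (normal) covariant representation of the algebra `𝔄_N`: a unitary `U` on a complex
Hilbert space `H` together with a unital *-representation `rep` of `L^∞(𝕋)` satisfying
`U rep(f) U⁻¹ = rep(f(z^N))`. -/
structure CovRep (N : ℕ) (H : Type*) [NormedAddCommGroup H] [InnerProductSpace ℂ H]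
    [CompleteSpace H] where
  U : H ≃ₗᵢ[ℂ] H
  rep : (ℝ → ℂ) → H →L[ℂ] H
  rep_one : rep 1 = 1
  rep_add : ∀ f g, IsFilter f → IsFilter g → rep (f + g) = rep f + rep g
  rep_smul : ∀ (c : ℂ) (f), IsFilter f → rep (c • f) = c • rep f
  rep_mul : ∀ f g, IsFilter f → IsFilter g → rep (f * g) = (rep f).comp (rep g)
  rep_star : ∀ f, IsFilter f →
    rep (fun x => conj (f x)) = ContinuousLinearMap.adjoint (rep f)
  covariant : ∀ f, IsFilter f → ∀ v : H, U (rep f v) = rep (fun x => f ((N : ℝ) * x)) (U v)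

/-- The cyclic representation of `𝔄_N` associated to an eigenfunction `h ≥ 0`,
`R_{m₀,m₀}h = h`: a covariant representation with a cyclic vector `phi` satisfying the
scaling relation `U phi = rep(m₀) phi` and `⟪phi, rep(f) phi⟫ = ∫_𝕋 f h dμ`. -/
structure CyclicRep (N : ℕ) (m₀ : ℝ → ℂ) (h : ℝ → ℝ) (H : Type*) [NormedAddCommGroup H]
    [InnerProductSpace ℂ H] [CompleteSpace H] extends CovRep N H where
  phi : H
  scaling : U phi = rep m₀ phi
  moment : ∀ f, IsFilter f → ⟪phi, rep f phi⟫ = circleInt fun x => f x * (h x : ℂ)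
  cyclic : Dense (Submodule.span ℂ
    {v : H | ∃ (n : ℕ) (f : ℝ → ℂ), IsFilter f ∧
      v = (fun w => U.symm w)^[n] (rep f phi)} : Set H)

/-!
The vectors `U^{-n} π(f) φ` span a dense subspace, and their inner products are forced by the
data: moving `U^{-min(n,m)}` across and using covariance together with `U φ = π(m₀) φ`, one gets
`⟪U^{-(m+k)} π(f) φ, U^{-m} π(g) φ⟫ = ∫ conj f · g(z^(N^k)) m₀(z) ⋯ m₀(z^(N^(k-1))) h dμ`.
Matching generators therefore defines an isometry between dense subspaces, which extends to a
unitary `W` intertwining `π` and `U` and fixing `φ`; any such `W` maps generators to generators,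
whence uniqueness. The same computation with an intertwiner `S` in the middle (the identity being
the case `h₀ = h`) expresses `⟪U^{-n} π(f) φ, S U'^{-m} π'(g) φ'⟫` through `m₀`, `m₀'` and `h₀`
alone, so `S₂ W'` and `W S₁` have the same matrix coefficients on generators and coincide.
-/

section HilbertSpace

variable {H K : Type*} [NormedAddCommGroup H] [InnerProductSpace ℂ H]
  [NormedAddCommGroup K] [InnerProductSpace ℂ K] [CompleteSpace K]

theorem exists_linearIsometry_apply_eq_of_inner_eq {ι : Type*} {g : ι → H} {g' : ι → K}
    (hg : Dense (Submodule.span ℂ (Set.range g) : Set H))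
    (hinner : ∀ i j, ⟪g i, g j⟫ = ⟪g' i, g' j⟫) :
    ∃ T : H →ₗᵢ[ℂ] K, ∀ i, T (g i) = g' i := by
  set e := Finsupp.linearCombination ℂ g
  set f := Finsupp.linearCombination ℂ g'
  have hnorm : ∀ x, ‖f x‖ = ‖e x‖ := by
    intro x
    have : ⟪f x, f x⟫ = ⟪e x, e x⟫ := by
      simp only [e, f, Finsupp.linearCombination_apply, Finsupp.sum, sum_inner, inner_sum,
        inner_smul_left, inner_smul_right, hinner]
    rw [norm_eq_sqrt_re_inner (𝕜 := ℂ), norm_eq_sqrt_re_inner (𝕜 := ℂ), this]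
  have he : DenseRange e := by
    rwa [DenseRange, ← LinearMap.coe_range, Finsupp.range_linearCombination]
  have hT : ∀ x, f.extendOfNorm e (e x) = f x :=
    LinearMap.extendOfNorm_eq he ⟨1, fun x => by rw [one_mul, hnorm]⟩
  refine ⟨⟨(f.extendOfNorm e).toLinearMap, fun v => ?_⟩, fun i => ?_⟩
  · induction v using he.induction_on with
    | hp => exact isClosed_eq (by fun_prop) continuous_norm
    | ih x => simp [hT, hnorm]
  · simpa [e, f] using hT (Finsupp.single i 1)

theorem exists_linearIsometryEquiv_apply_eq_of_inner_eq [CompleteSpace H] {ι : Type*}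
    {g : ι → H} {g' : ι → K}
    (hg : Dense (Submodule.span ℂ (Set.range g) : Set H))
    (hg' : Dense (Submodule.span ℂ (Set.range g') : Set K))
    (hinner : ∀ i j, ⟪g i, g j⟫ = ⟪g' i, g' j⟫) :
    ∃ W : H ≃ₗᵢ[ℂ] K, ∀ i, W (g i) = g' i := by
  obtain ⟨T, hT⟩ := exists_linearIsometry_apply_eq_of_inner_eq hg hinner
  obtain ⟨T', hT'⟩ := exists_linearIsometry_apply_eq_of_inner_eq hg' fun i j => (hinner i j).symm
  have hTT' : T.toContinuousLinearMap ∘L T'.toContinuousLinearMap = ContinuousLinearMap.id ℂ K :=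
    ContinuousLinearMap.ext_on hg' <| by rintro _ ⟨i, rfl⟩; simp [hT, hT']
  exact ⟨LinearIsometryEquiv.ofSurjective T fun y => ⟨T' y, congr($hTT' y)⟩, hT⟩

theorem eq_of_inner_eq_of_dense_span {s : Set H} (hs : Dense (Submodule.span ℂ s : Set H))
    {x y : H} (h : ∀ v ∈ s, ⟪v, x⟫ = ⟪v, y⟫) : x = y := by
  refine innerSL_inj.mp (ContinuousLinearMap.ext_on hs fun v hv => ?_)
  simp only [innerSL_apply_apply]
  rw [← inner_conj_symm, h v hv, inner_conj_symm]

variable {E : Type*} [NormedAddCommGroup E] [InnerProductSpace ℂ E]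

theorem LinearIsometryEquiv.inner_iterate_symm_left (U : E ≃ₗᵢ[ℂ] E) (k : ℕ) (a b : E) :
    ⟪(⇑U.symm)^[k] a, b⟫ = ⟪a, (⇑U)^[k] b⟫ := by
  induction k generalizing b with
  | zero => rfl
  | succ k ih =>
    rw [Function.iterate_succ_apply', U.symm.inner_map_eq_flip, U.symm_symm, ih,
      Function.iterate_succ_apply]

theorem LinearIsometryEquiv.inner_iterate_symm_right (U : E ≃ₗᵢ[ℂ] E) (k : ℕ) (a b : E) :
    ⟪a, (⇑U.symm)^[k] b⟫ = ⟪(⇑U)^[k] a, b⟫ := by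
  rw [← inner_conj_symm, U.inner_iterate_symm_left, inner_conj_symm]

theorem LinearIsometryEquiv.inner_iterate_symm_iterate_symm (U : E ≃ₗᵢ[ℂ] E) (k : ℕ) (a b : E) :
    ⟪(⇑U.symm)^[k] a, (⇑U.symm)^[k] b⟫ = ⟪a, b⟫ := by
  rw [U.inner_iterate_symm_left, (Function.LeftInverse.iterate U.apply_symm_apply k) b]

end HilbertSpace

section Filters

lemma isFilter_one : IsFilter (1 : ℝ → ℂ) :=
  ⟨measurable_const, ⟨1, fun _ => by simp⟩, fun _ => rfl⟩

lemma IsFilter.mul {f g : ℝ → ℂ} (hf : IsFilter f) (hg : IsFilter g) : IsFilter (f * g) := by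
  obtain ⟨mf, ⟨C, hC⟩, pf⟩ := hf
  obtain ⟨mg, ⟨D, hD⟩, pg⟩ := hg
  refine ⟨mf.mul mg, ⟨C * D, fun x => ?_⟩, fun x => by simp [pf x, pg x]⟩
  rw [Pi.mul_apply, norm_mul]
  exact mul_le_mul (hC x) (hD x) (norm_nonneg _) ((norm_nonneg _).trans (hC x))

lemma IsFilter.conj {f : ℝ → ℂ} (hf : IsFilter f) : IsFilter fun x => conj (f x) := by
  obtain ⟨mf, ⟨C, hC⟩, pf⟩ := hf
  exact ⟨Complex.continuous_conj.measurable.comp mf, ⟨C, fun x => by simpa using hC x⟩,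
    fun x => by simp [pf x]⟩

/-- `f(z^(N^k))` on the circle. -/
def dilate (N k : ℕ) (f : ℝ → ℂ) : ℝ → ℂ := fun x => f ((N : ℝ) ^ k * x)

lemma dilate_zero (N : ℕ) (f : ℝ → ℂ) : dilate N 0 f = f := by
  ext x; simp [dilate]

lemma dilate_dilate (N j k : ℕ) (f : ℝ → ℂ) : dilate N j (dilate N k f) = dilate N (j + k) f := by
  ext x; simp only [dilate]; ring_nf

lemma IsFilter.dilate {f : ℝ → ℂ} (hf : IsFilter f) (N k : ℕ) : IsFilter (dilate N k f) := by
  obtain ⟨mf, ⟨C, hC⟩, pf⟩ := hf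
  refine ⟨mf.comp (measurable_const_mul _), ⟨C, fun x => hC _⟩, fun x => ?_⟩
  have := (Function.Periodic.nat_mul pf (N ^ k)) ((N : ℝ) ^ k * x)
  simp only [_root_.dilate, mul_add]
  push_cast at this
  exact this

/-- `m₀(z) m₀(z^N) ⋯ m₀(z^(N^(k-1)))`, the multiplier with `U^k φ = π(maskProd N m₀ k) φ`. -/
def maskProd (N : ℕ) (m₀ : ℝ → ℂ) (k : ℕ) : ℝ → ℂ := fun x =>
  ∏ j ∈ Finset.range k, m₀ ((N : ℝ) ^ j * x)

lemma maskProd_zero (N : ℕ) (m₀ : ℝ → ℂ) : maskProd N m₀ 0 = 1 := by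
  ext x; simp [maskProd]

lemma maskProd_succ (N : ℕ) (m₀ : ℝ → ℂ) (k : ℕ) :
    maskProd N m₀ (k + 1) = dilate N 1 (maskProd N m₀ k) * m₀ := by
  ext x
  simp only [maskProd, dilate, Pi.mul_apply, Finset.prod_range_succ', pow_zero, one_mul]
  congr 1
  refine Finset.prod_congr rfl fun j _ => ?_
  ring_nf

lemma IsFilter.maskProd {m₀ : ℝ → ℂ} (hm : IsFilter m₀) (N k : ℕ) : IsFilter (maskProd N m₀ k) := by
  induction k with
  | zero => rw [maskProd_zero]; exact isFilter_one
  | succ k ih => rw [maskProd_succ]; exact (ih.dilate N 1).mul hm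

end Filters

namespace CovRep

variable {N : ℕ} {H : Type*} [NormedAddCommGroup H] [InnerProductSpace ℂ H] [CompleteSpace H]
  (ρ : CovRep N H) {f g : ℝ → ℂ}

lemma rep_mul_apply (hf : IsFilter f) (hg : IsFilter g) (v : H) :
    ρ.rep (f * g) v = ρ.rep f (ρ.rep g v) := by
  rw [ρ.rep_mul f g hf hg, ContinuousLinearMap.comp_apply]

lemma inner_rep_left (hf : IsFilter f) (x y : H) :
    ⟪ρ.rep f x, y⟫ = ⟪x, ρ.rep (fun t => conj (f t)) y⟫ := by
  rw [ρ.rep_star f hf, ContinuousLinearMap.adjoint_inner_right]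

lemma U_rep (hf : IsFilter f) (v : H) : ρ.U (ρ.rep f v) = ρ.rep (dilate N 1 f) (ρ.U v) := by
  have hdil : dilate N 1 f = fun x => f (N * x) := by ext x; simp [dilate]
  rw [hdil, ρ.covariant f hf v]

lemma iterate_U_rep (hf : IsFilter f) (k : ℕ) (v : H) :
    (⇑ρ.U)^[k] (ρ.rep f v) = ρ.rep (dilate N k f) ((⇑ρ.U)^[k] v) := by
  induction k with
  | zero => simp [dilate_zero]
  | succ k ih =>
    rw [Function.iterate_succ_apply', ih, ρ.U_rep (hf.dilate N k), dilate_dilate, add_comm,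
      Function.iterate_succ_apply']

lemma rep_U_symm (hf : IsFilter f) (v : H) :
    ρ.rep f (ρ.U.symm v) = ρ.U.symm (ρ.rep (dilate N 1 f) v) := by
  rw [LinearIsometryEquiv.eq_symm_apply, ρ.U_rep hf, LinearIsometryEquiv.apply_symm_apply]

end CovRep

namespace CyclicRep

variable {N : ℕ} {m₀ : ℝ → ℂ} {h : ℝ → ℝ}
  {H : Type*} [NormedAddCommGroup H] [InnerProductSpace ℂ H] [CompleteSpace H]
  (ρ : CyclicRep N m₀ h H) {f g : ℝ → ℂ}

def gen (n : ℕ) (f : ℝ → ℂ) : H := (⇑ρ.U.symm)^[n] (ρ.rep f ρ.phi)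

lemma gen_zero (f : ℝ → ℂ) : ρ.gen 0 f = ρ.rep f ρ.phi := rfl

lemma gen_succ (n : ℕ) (f : ℝ → ℂ) : ρ.gen (n + 1) f = ρ.U.symm (ρ.gen n f) :=
  Function.iterate_succ_apply' _ _ _

lemma gen_add (n k : ℕ) (f : ℝ → ℂ) : ρ.gen (n + k) f = (⇑ρ.U.symm)^[n] (ρ.gen k f) := by
  rw [gen, gen, Function.iterate_add_apply]

lemma gen_zero_one : ρ.gen 0 1 = ρ.phi := by
  rw [gen_zero, ρ.rep_one]
  rfl

lemma rep_gen (hf : IsFilter f) (hg : IsFilter g) (n : ℕ) :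
    ρ.rep f (ρ.gen n g) = ρ.gen n (dilate N n f * g) := by
  induction n generalizing f with
  | zero => rw [gen_zero, gen_zero, dilate_zero, ρ.rep_mul_apply hf hg]
  | succ n ih => rw [gen_succ, ρ.rep_U_symm hf, ih (hf.dilate N 1), gen_succ, dilate_dilate]

lemma iterate_U_phi (hm : IsFilter m₀) (k : ℕ) :
    (⇑ρ.U)^[k] ρ.phi = ρ.rep (maskProd N m₀ k) ρ.phi := by
  induction k with
  | zero => simp [maskProd_zero, ρ.rep_one]
  | succ k ih =>
    rw [Function.iterate_succ_apply', ih, ρ.U_rep (hm.maskProd N k), ρ.scaling,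
      ← ρ.rep_mul_apply ((hm.maskProd N k).dilate N 1) hm, maskProd_succ]

lemma iterate_U_rep_phi (hm : IsFilter m₀) (hg : IsFilter g) (k : ℕ) :
    (⇑ρ.U)^[k] (ρ.rep g ρ.phi) = ρ.rep (dilate N k g * maskProd N m₀ k) ρ.phi := by
  rw [ρ.iterate_U_rep hg, ρ.iterate_U_phi hm,
    ρ.rep_mul_apply (hg.dilate N k) (hm.maskProd N k)]

lemma dense_span_gen :
    Dense (Submodule.span ℂ (Set.range fun i : ℕ × {f : ℝ → ℂ // IsFilter f} =>
      ρ.gen i.1 i.2) : Set H) := by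
  convert ρ.cyclic using 4
  ext v
  constructor
  · rintro ⟨⟨n, f, hf⟩, rfl⟩
    exact ⟨n, f, hf, rfl⟩
  · rintro ⟨n, f, hf, rfl⟩
    exact ⟨⟨n, f, hf⟩, rfl⟩

lemma continuousLinearMap_ext {K : Type*} [NormedAddCommGroup K] [NormedSpace ℂ K]
    {T T' : H →L[ℂ] K}
    (hT : ∀ n f, IsFilter f → T (ρ.gen n f) = T' (ρ.gen n f)) : T = T' :=
  ContinuousLinearMap.ext_on ρ.dense_span_gen <| by
    rintro _ ⟨⟨n, f, hf⟩, rfl⟩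
    exact hT n f hf

lemma eq_of_inner_gen_eq {x y : H} (h : ∀ n f, IsFilter f → ⟪ρ.gen n f, x⟫ = ⟪ρ.gen n f, y⟫) :
    x = y :=
  eq_of_inner_eq_of_dense_span ρ.dense_span_gen <| by
    rintro _ ⟨⟨n, f, hf⟩, rfl⟩
    exact h n f hf

end CyclicRep

section Intertwiner

variable {N : ℕ} {m₀ m₀' : ℝ → ℂ} {h h' : ℝ → ℝ} {h₀ : ℝ → ℂ}
  {H H' : Type*} [NormedAddCommGroup H] [InnerProductSpace ℂ H] [CompleteSpace H]
  [NormedAddCommGroup H'] [InnerProductSpace ℂ H'] [CompleteSpace H']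

structure IsIntertwiner (ρ : CyclicRep N m₀ h H) (ρ' : CyclicRep N m₀' h' H') (h₀ : ℝ → ℂ)
    (S : H' →L[ℂ] H) : Prop where
  comp_rep : ∀ f, IsFilter f → S.comp (ρ'.rep f) = (ρ.rep f).comp S
  map_U : ∀ v, S (ρ'.U v) = ρ.U (S v)
  inner_phi : ∀ f, IsFilter f → ⟪ρ.phi, S (ρ'.rep f ρ'.phi)⟫ = circleInt fun x => f x * h₀ x

namespace IsIntertwiner

lemma id (ρ : CyclicRep N m₀ h H) :
    IsIntertwiner ρ ρ (fun x => (h x : ℂ)) (ContinuousLinearMap.id ℂ H) :=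
  ⟨fun f _ => by simp, fun _ => rfl, ρ.moment⟩

variable {ρ : CyclicRep N m₀ h H} {ρ' : CyclicRep N m₀' h' H'} {S : H' →L[ℂ] H}
  {f g : ℝ → ℂ}

lemma map_rep (hS : IsIntertwiner ρ ρ' h₀ S) (hf : IsFilter f) (v : H') :
    S (ρ'.rep f v) = ρ.rep f (S v) :=
  congr($(hS.comp_rep f hf) v)

lemma map_iterate_U (hS : IsIntertwiner ρ ρ' h₀ S) (k : ℕ) (v : H') :
    S ((⇑ρ'.U)^[k] v) = (⇑ρ.U)^[k] (S v) :=
  (Function.Semiconj.iterate_right hS.map_U k) v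

lemma map_iterate_U_symm (hS : IsIntertwiner ρ ρ' h₀ S) (k : ℕ) (v : H') :
    S ((⇑ρ'.U.symm)^[k] v) = (⇑ρ.U.symm)^[k] (S v) :=
  (Function.Semiconj.iterate_right (Function.Semiconj.inverses_right hS.map_U
    ρ'.U.apply_symm_apply ρ.U.symm_apply_apply) k) v

lemma inner_rep_phi_map_rep_phi (hS : IsIntertwiner ρ ρ' h₀ S) (hf : IsFilter f) (hg : IsFilter g) :
    ⟪ρ.rep f ρ.phi, S (ρ'.rep g ρ'.phi)⟫ = circleInt fun x => conj (f x) * g x * h₀ x := by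
  rw [ρ.inner_rep_left hf, ← hS.map_rep hf.conj, ← ρ'.rep_mul_apply hf.conj hg,
    hS.inner_phi _ (hf.conj.mul hg)]
  rfl

lemma inner_gen_add_map_gen_add (hS : IsIntertwiner ρ ρ' h₀ S) (n k l : ℕ) (f g : ℝ → ℂ) :
    ⟪ρ.gen (n + k) f, S (ρ'.gen (n + l) g)⟫ = ⟪ρ.gen k f, S (ρ'.gen l g)⟫ := by
  rw [ρ.gen_add, ρ'.gen_add, hS.map_iterate_U_symm, ρ.U.inner_iterate_symm_iterate_symm]

lemma inner_gen_map_gen_zero (hS : IsIntertwiner ρ ρ' h₀ S) (hm' : IsFilter m₀')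
    (hf : IsFilter f) (hg : IsFilter g) (k : ℕ) :
    ⟪ρ.gen k f, S (ρ'.gen 0 g)⟫ =
      circleInt fun x => conj (f x) * (dilate N k g * maskProd N m₀' k) x * h₀ x := by
  rw [CyclicRep.gen, ρ.U.inner_iterate_symm_left, ← hS.map_iterate_U, CyclicRep.gen_zero,
    ρ'.iterate_U_rep_phi hm' hg,
    hS.inner_rep_phi_map_rep_phi hf ((hg.dilate N k).mul (hm'.maskProd N k))]

lemma inner_gen_zero_map_gen (hS : IsIntertwiner ρ ρ' h₀ S) (hm : IsFilter m₀)
    (hf : IsFilter f) (hg : IsFilter g) (k : ℕ) :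
    ⟪ρ.gen 0 f, S (ρ'.gen k g)⟫ =
      circleInt fun x => conj ((dilate N k f * maskProd N m₀ k) x) * g x * h₀ x := by
  rw [CyclicRep.gen_zero, CyclicRep.gen, hS.map_iterate_U_symm, ρ.U.inner_iterate_symm_right,
    ρ.iterate_U_rep_phi hm hf,
    hS.inner_rep_phi_map_rep_phi ((hf.dilate N k).mul (hm.maskProd N k)) hg]

end IsIntertwiner

end Intertwiner

section Uniqueness

variable {N : ℕ} {m₀ m₀' : ℝ → ℂ} {h h' : ℝ → ℝ} {h₀ : ℝ → ℂ}
  {H₁ H₂ H₁' H₂' : Type*}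
  [NormedAddCommGroup H₁] [InnerProductSpace ℂ H₁] [CompleteSpace H₁]
  [NormedAddCommGroup H₂] [InnerProductSpace ℂ H₂] [CompleteSpace H₂]
  [NormedAddCommGroup H₁'] [InnerProductSpace ℂ H₁'] [CompleteSpace H₁']
  [NormedAddCommGroup H₂'] [InnerProductSpace ℂ H₂'] [CompleteSpace H₂']

theorem IsIntertwiner.inner_gen_map_gen_eq (hm : IsFilter m₀) (hm' : IsFilter m₀')
    {ρ₁ : CyclicRep N m₀ h H₁} {ρ₁' : CyclicRep N m₀' h' H₁'} {S₁ : H₁' →L[ℂ] H₁}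
    {ρ₂ : CyclicRep N m₀ h H₂} {ρ₂' : CyclicRep N m₀' h' H₂'} {S₂ : H₂' →L[ℂ] H₂}
    (hS₁ : IsIntertwiner ρ₁ ρ₁' h₀ S₁) (hS₂ : IsIntertwiner ρ₂ ρ₂' h₀ S₂)
    (n m : ℕ) {f g : ℝ → ℂ} (hf : IsFilter f) (hg : IsFilter g) :
    ⟪ρ₁.gen n f, S₁ (ρ₁'.gen m g)⟫ = ⟪ρ₂.gen n f, S₂ (ρ₂'.gen m g)⟫ := by
  rcases le_total m n with hmn | hnm
  · obtain ⟨k, rfl⟩ := Nat.exists_eq_add_of_le hmn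
    have h₁ := hS₁.inner_gen_add_map_gen_add m k 0 f g
    have h₂ := hS₂.inner_gen_add_map_gen_add m k 0 f g
    rw [add_zero] at h₁ h₂
    rw [h₁, h₂, hS₁.inner_gen_map_gen_zero hm' hf hg, hS₂.inner_gen_map_gen_zero hm' hf hg]
  · obtain ⟨k, rfl⟩ := Nat.exists_eq_add_of_le hnm
    have h₁ := hS₁.inner_gen_add_map_gen_add n 0 k f g
    have h₂ := hS₂.inner_gen_add_map_gen_add n 0 k f g
    rw [add_zero] at h₁ h₂
    rw [h₁, h₂, hS₁.inner_gen_zero_map_gen hm hf hg, hS₂.inner_gen_zero_map_gen hm hf hg]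

theorem CyclicRep.inner_gen_gen_eq (hm : IsFilter m₀) (ρ₁ : CyclicRep N m₀ h H₁)
    (ρ₂ : CyclicRep N m₀ h H₂) (n m : ℕ) {f g : ℝ → ℂ} (hf : IsFilter f) (hg : IsFilter g) :
    ⟪ρ₁.gen n f, ρ₁.gen m g⟫ = ⟪ρ₂.gen n f, ρ₂.gen m g⟫ :=
  (IsIntertwiner.id ρ₁).inner_gen_map_gen_eq hm hm (IsIntertwiner.id ρ₂) n m hf hg

def IsUnitaryEquiv (ρ : CyclicRep N m₀ h H₁) (σ : CyclicRep N m₀ h H₂) (W : H₁ ≃ₗᵢ[ℂ] H₂) :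
    Prop :=
  (∀ f, IsFilter f → ∀ v, W (ρ.rep f v) = σ.rep f (W v)) ∧
    (∀ v, W (ρ.U v) = σ.U (W v)) ∧ W ρ.phi = σ.phi

theorem isUnitaryEquiv_iff_map_gen {ρ : CyclicRep N m₀ h H₁} {σ : CyclicRep N m₀ h H₂}
    {W : H₁ ≃ₗᵢ[ℂ] H₂} :
    IsUnitaryEquiv ρ σ W ↔ ∀ n f, IsFilter f → W (ρ.gen n f) = σ.gen n f := by
  constructor
  · rintro ⟨hrep, hU, hphi⟩ n f hf
    have hU_symm : Function.Semiconj W ρ.U.symm σ.U.symm :=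
      Function.Semiconj.inverses_right hU ρ.U.apply_symm_apply σ.U.symm_apply_apply
    induction n with
    | zero => rw [CyclicRep.gen_zero, CyclicRep.gen_zero, hrep f hf, hphi]
    | succ n ih => rw [CyclicRep.gen_succ, CyclicRep.gen_succ, hU_symm, ih]
  · intro hgen
    have hU_symm : ∀ v, W (ρ.U.symm v) = σ.U.symm (W v) := fun v =>
      congr($(ρ.continuousLinearMap_ext (T := (W : H₁ →L[ℂ] H₂) ∘L (ρ.U.symm : H₁ →L[ℂ] H₁))
        (T' := (σ.U.symm : H₂ →L[ℂ] H₂) ∘L (W : H₁ →L[ℂ] H₂)) fun n f hf => by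
          simp [← CyclicRep.gen_succ, hgen _ f hf]) v)
    refine ⟨fun f hf v => ?_, fun v => ?_, ?_⟩
    · refine congr($(ρ.continuousLinearMap_ext (T := (W : H₁ →L[ℂ] H₂) ∘L ρ.rep f)
        (T' := σ.rep f ∘L (W : H₁ →L[ℂ] H₂)) fun n g hg => ?_) v)
      simp [ρ.rep_gen hf hg, σ.rep_gen hf hg, hgen n _ ((hf.dilate N n).mul hg), hgen n g hg]
    · rw [← σ.U.symm_apply_eq, ← hU_symm, LinearIsometryEquiv.symm_apply_apply]
    · rw [← ρ.gen_zero_one, hgen 0 1 isFilter_one, σ.gen_zero_one]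

theorem IsUnitaryEquiv.map_gen {ρ : CyclicRep N m₀ h H₁} {σ : CyclicRep N m₀ h H₂}
    {W : H₁ ≃ₗᵢ[ℂ] H₂} (hW : IsUnitaryEquiv ρ σ W) (n : ℕ) (f : ℝ → ℂ) (hf : IsFilter f) :
    W (ρ.gen n f) = σ.gen n f :=
  isUnitaryEquiv_iff_map_gen.mp hW n f hf

theorem CyclicRep.existsUnique_isUnitaryEquiv (hm : IsFilter m₀) (ρ : CyclicRep N m₀ h H₁)
    (σ : CyclicRep N m₀ h H₂) : ∃! W : H₁ ≃ₗᵢ[ℂ] H₂, IsUnitaryEquiv ρ σ W := by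
  obtain ⟨W, hW⟩ := exists_linearIsometryEquiv_apply_eq_of_inner_eq ρ.dense_span_gen
    σ.dense_span_gen fun i j => ρ.inner_gen_gen_eq hm σ i.1 j.1 i.2.2 j.2.2
  refine ⟨W, isUnitaryEquiv_iff_map_gen.mpr fun n f hf => hW (n, ⟨f, hf⟩), fun W₂ hW₂ => ?_⟩
  refine LinearIsometryEquiv.ext fun v => congr($(ρ.continuousLinearMap_ext
    (T := (W₂ : H₁ →L[ℂ] H₂)) (T' := (W : H₁ →L[ℂ] H₂)) fun n f hf => ?_) v)
  exact (hW₂.map_gen n f hf).trans (hW (n, ⟨f, hf⟩)).symm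

theorem IsIntertwiner.map_comm_of_isUnitaryEquiv (hm : IsFilter m₀) (hm' : IsFilter m₀')
    {ρ₁ : CyclicRep N m₀ h H₁} {ρ₁' : CyclicRep N m₀' h' H₁'} {S₁ : H₁' →L[ℂ] H₁}
    {ρ₂ : CyclicRep N m₀ h H₂} {ρ₂' : CyclicRep N m₀' h' H₂'} {S₂ : H₂' →L[ℂ] H₂}
    (hS₁ : IsIntertwiner ρ₁ ρ₁' h₀ S₁) (hS₂ : IsIntertwiner ρ₂ ρ₂' h₀ S₂)
    {W : H₁ ≃ₗᵢ[ℂ] H₂} {W' : H₁' ≃ₗᵢ[ℂ] H₂'}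
    (hW : IsUnitaryEquiv ρ₁ ρ₂ W) (hW' : IsUnitaryEquiv ρ₁' ρ₂' W') (v : H₁') :
    S₂ (W' v) = W (S₁ v) := by
  refine congr($(ρ₁'.continuousLinearMap_ext (T := S₂ ∘L (W' : H₁' →L[ℂ] H₂'))
    (T' := (W : H₁ →L[ℂ] H₂) ∘L S₁) fun m g hg => ?_) v)
  refine ρ₂.eq_of_inner_gen_eq fun n f hf => ?_
  calc ⟪ρ₂.gen n f, S₂ (W' (ρ₁'.gen m g))⟫ = ⟪ρ₂.gen n f, S₂ (ρ₂'.gen m g)⟫ := by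
        rw [hW'.map_gen m g hg]
    _ = ⟪ρ₁.gen n f, S₁ (ρ₁'.gen m g)⟫ := (hS₁.inner_gen_map_gen_eq hm hm' hS₂ n m hf hg).symm
    _ = ⟪W (ρ₁.gen n f), W (S₁ (ρ₁'.gen m g))⟫ := (W.inner_map_map _ _).symm
    _ = ⟪ρ₂.gen n f, W (S₁ (ρ₁'.gen m g))⟫ := by rw [hW.map_gen n f hf]

end Uniqueness

theorem stmt_6_general {H₁ H₂ H₁' H₂' : Type*}
    [NormedAddCommGroup H₁] [InnerProductSpace ℂ H₁] [CompleteSpace H₁]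
    [NormedAddCommGroup H₂] [InnerProductSpace ℂ H₂] [CompleteSpace H₂]
    [NormedAddCommGroup H₁'] [InnerProductSpace ℂ H₁'] [CompleteSpace H₁']
    [NormedAddCommGroup H₂'] [InnerProductSpace ℂ H₂'] [CompleteSpace H₂']
    (N : ℕ) (m₀ m₀' : ℝ → ℂ)
    (hm₀ : IsFilter m₀) (hm₀' : IsFilter m₀')
    (h h' : ℝ → ℝ)
    (h₀ : ℝ → ℂ)
    -- two cyclic representations for h, two for h', and intertwiners S₁, S₂
    (ρ₁ : CyclicRep N m₀ h H₁) (ρ₂ : CyclicRep N m₀ h H₂)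
    (ρ₁' : CyclicRep N m₀' h' H₁') (ρ₂' : CyclicRep N m₀' h' H₂')
    (S₁ : H₁' →L[ℂ] H₁) (S₂ : H₂' →L[ℂ] H₂)
    (hS₁rep : ∀ f, IsFilter f → S₁.comp (ρ₁'.rep f) = (ρ₁.rep f).comp S₁)
    (hS₂rep : ∀ f, IsFilter f → S₂.comp (ρ₂'.rep f) = (ρ₂.rep f).comp S₂)
    (hS₁U : ∀ v, S₁ (ρ₁'.U v) = ρ₁.U (S₁ v))
    (hS₂U : ∀ v, S₂ (ρ₂'.U v) = ρ₂.U (S₂ v))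
    (hS₁mom : ∀ f, IsFilter f →
      ⟪ρ₁.phi, S₁ (ρ₁'.rep f ρ₁'.phi)⟫ = circleInt fun x => f x * h₀ x)
    (hS₂mom : ∀ f, IsFilter f →
      ⟪ρ₂.phi, S₂ (ρ₂'.rep f ρ₂'.phi)⟫ = circleInt fun x => f x * h₀ x) :
    ∃ (W : H₁ ≃ₗᵢ[ℂ] H₂) (W' : H₁' ≃ₗᵢ[ℂ] H₂'),
      ((∀ f, IsFilter f → ∀ v, W (ρ₁.rep f v) = ρ₂.rep f (W v)) ∧
        (∀ v, W (ρ₁.U v) = ρ₂.U (W v)) ∧ W ρ₁.phi = ρ₂.phi ∧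
        (∀ f, IsFilter f → ∀ v, W' (ρ₁'.rep f v) = ρ₂'.rep f (W' v)) ∧
        (∀ v, W' (ρ₁'.U v) = ρ₂'.U (W' v)) ∧ W' ρ₁'.phi = ρ₂'.phi ∧
        (∀ v, S₂ (W' v) = W (S₁ v))) ∧
      ∀ (W₂ : H₁ ≃ₗᵢ[ℂ] H₂) (W₂' : H₁' ≃ₗᵢ[ℂ] H₂'),
        ((∀ f, IsFilter f → ∀ v, W₂ (ρ₁.rep f v) = ρ₂.rep f (W₂ v)) ∧
          (∀ v, W₂ (ρ₁.U v) = ρ₂.U (W₂ v)) ∧ W₂ ρ₁.phi = ρ₂.phi ∧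
          (∀ f, IsFilter f → ∀ v, W₂' (ρ₁'.rep f v) = ρ₂'.rep f (W₂' v)) ∧
          (∀ v, W₂' (ρ₁'.U v) = ρ₂'.U (W₂' v)) ∧ W₂' ρ₁'.phi = ρ₂'.phi ∧
          (∀ v, S₂ (W₂' v) = W₂ (S₁ v))) →
        W₂ = W ∧ W₂' = W' := by
  have hS₁ : IsIntertwiner ρ₁ ρ₁' h₀ S₁ := ⟨hS₁rep, hS₁U, hS₁mom⟩
  have hS₂ : IsIntertwiner ρ₂ ρ₂' h₀ S₂ := ⟨hS₂rep, hS₂U, hS₂mom⟩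
  obtain ⟨W, hW, hW_unique⟩ := ρ₁.existsUnique_isUnitaryEquiv hm₀ ρ₂
  obtain ⟨W', hW', hW'_unique⟩ := ρ₁'.existsUnique_isUnitaryEquiv hm₀' ρ₂'
  refine ⟨W, W', ⟨hW.1, hW.2.1, hW.2.2, hW'.1, hW'.2.1, hW'.2.2,
    hS₁.map_comm_of_isUnitaryEquiv hm₀ hm₀' hS₂ hW hW'⟩, ?_⟩
  rintro W₂ W₂' ⟨hrep, hU, hphi, hrep', hU', hphi', -⟩
  exact ⟨hW_unique W₂ ⟨hrep, hU, hphi⟩, hW'_unique W₂' ⟨hrep', hU', hphi'⟩⟩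

theorem stmt_6 {H₁ H₂ H₁' H₂' : Type*}
    [NormedAddCommGroup H₁] [InnerProductSpace ℂ H₁] [CompleteSpace H₁]
    [NormedAddCommGroup H₂] [InnerProductSpace ℂ H₂] [CompleteSpace H₂]
    [NormedAddCommGroup H₁'] [InnerProductSpace ℂ H₁'] [CompleteSpace H₁']
    [NormedAddCommGroup H₂'] [InnerProductSpace ℂ H₂'] [CompleteSpace H₂']
    (N : ℕ) (hN : 2 ≤ N) (m₀ m₀' : ℝ → ℂ)
    (hm₀ : IsFilter m₀) (hm₀' : IsFilter m₀')
    (hns : NonSingular m₀) (hns' : NonSingular m₀')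
    (h h' : ℝ → ℝ)
    (hh1 : MemL1T fun x => (h x : ℂ)) (hhpos : ∀ x, 0 ≤ h x)
    (hh'1 : MemL1T fun x => (h' x : ℂ)) (hh'pos : ∀ x, 0 ≤ h' x)
    (hheig : ∀ᵐ ω ∂(volume : Measure ℝ), ruelle N m₀ m₀ (fun x => (h x : ℂ)) ω = (h ω : ℂ))
    (hh'eig : ∀ᵐ ω ∂(volume : Measure ℝ), ruelle N m₀' m₀' (fun x => (h' x : ℂ)) ω = (h' ω : ℂ))
    (h₀ : ℝ → ℂ) (hh₀1 : MemL1T h₀)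
    (hh₀eig : ∀ᵐ ω ∂(volume : Measure ℝ), ruelle N m₀ m₀' h₀ ω = h₀ ω)
    -- two cyclic representations for h, two for h', and intertwiners S₁, S₂
    (ρ₁ : CyclicRep N m₀ h H₁) (ρ₂ : CyclicRep N m₀ h H₂)
    (ρ₁' : CyclicRep N m₀' h' H₁') (ρ₂' : CyclicRep N m₀' h' H₂')
    (S₁ : H₁' →L[ℂ] H₁) (S₂ : H₂' →L[ℂ] H₂)
    (hS₁rep : ∀ f, IsFilter f → S₁.comp (ρ₁'.rep f) = (ρ₁.rep f).comp S₁)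
    (hS₂rep : ∀ f, IsFilter f → S₂.comp (ρ₂'.rep f) = (ρ₂.rep f).comp S₂)
    (hS₁U : ∀ v, S₁ (ρ₁'.U v) = ρ₁.U (S₁ v))
    (hS₂U : ∀ v, S₂ (ρ₂'.U v) = ρ₂.U (S₂ v))
    (hS₁mom : ∀ f, IsFilter f →
      ⟪ρ₁.phi, S₁ (ρ₁'.rep f ρ₁'.phi)⟫ = circleInt fun x => f x * h₀ x)
    (hS₂mom : ∀ f, IsFilter f →
      ⟪ρ₂.phi, S₂ (ρ₂'.rep f ρ₂'.phi)⟫ = circleInt fun x => f x * h₀ x) :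
    ∃ (W : H₁ ≃ₗᵢ[ℂ] H₂) (W' : H₁' ≃ₗᵢ[ℂ] H₂'),
      ((∀ f, IsFilter f → ∀ v, W (ρ₁.rep f v) = ρ₂.rep f (W v)) ∧
        (∀ v, W (ρ₁.U v) = ρ₂.U (W v)) ∧ W ρ₁.phi = ρ₂.phi ∧
        (∀ f, IsFilter f → ∀ v, W' (ρ₁'.rep f v) = ρ₂'.rep f (W' v)) ∧
        (∀ v, W' (ρ₁'.U v) = ρ₂'.U (W' v)) ∧ W' ρ₁'.phi = ρ₂'.phi ∧
        (∀ v, S₂ (W' v) = W (S₁ v))) ∧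
      ∀ (W₂ : H₁ ≃ₗᵢ[ℂ] H₂) (W₂' : H₁' ≃ₗᵢ[ℂ] H₂'),
        ((∀ f, IsFilter f → ∀ v, W₂ (ρ₁.rep f v) = ρ₂.rep f (W₂ v)) ∧
          (∀ v, W₂ (ρ₁.U v) = ρ₂.U (W₂ v)) ∧ W₂ ρ₁.phi = ρ₂.phi ∧
          (∀ f, IsFilter f → ∀ v, W₂' (ρ₁'.rep f v) = ρ₂'.rep f (W₂' v)) ∧
          (∀ v, W₂' (ρ₁'.U v) = ρ₂'.U (W₂' v)) ∧ W₂' ρ₁'.phi = ρ₂'.phi ∧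
          (∀ v, S₂ (W₂' v) = W₂ (S₁ v))) →
        W₂ = W ∧ W₂' = W' :=
  stmt_6_general N m₀ m₀' hm₀ hm₀' h h' h₀ ρ₁ ρ₂ ρ₁' ρ₂' S₁ S₂ hS₁rep hS₂rep hS₁U hS₂U hS₁mom hS₂mom
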